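/- For a tagged pentatope with affinely independent vertices in ℝ⁴, the hyperface shared by its two bisection children is conv(x', x₁, x₂, x₃), where x' = (x₀+x₄)/2; this set equals conv(x₀,…,x₄) ∩ H where H is the affine hyperplane through x', x₁, x₂, x₃. -/

import Mathlib

/-- A tagged pentatope: an ordered 5-tuple of vertices together with a type γ ∈ {0,1,2,3}. -/
structure TP (V : Type*) where
  v : Fin 5 → V
  γ : Fin 4

/-- The vertex permutation used in Stevenson's reflection, depending on the type. -/
def refPerm (γ : Fin 4) : Fin 5 → Fin 5 :=
  if γ = 0 then ![4, 3, 2, 1, 0]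
  else if γ = 1 then ![4, 1, 3, 2, 0]
  else ![4, 1, 2, 3, 0]

/-- The reflection of a tagged pentatope. -/
def TP.reflect {V : Type*} (t : TP V) : TP V := ⟨t.v ∘ refPerm t.γ, t.γ⟩

variable {V : Type*} [AddCommGroup V] [Module ℝ V]

/-- The midpoint x' = (x₀ + x₄)/2 of the refinement edge. -/
noncomputable def TP.mid (t : TP V) : V := midpoint ℝ (t.v 0) (t.v 4)

/-- First child of the bisection rule. -/
noncomputable def TP.child1 (t : TP V) : TP V :=
  ⟨![t.v 0, t.mid, t.v 1, t.v 2, t.v 3], t.γ + 1⟩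

/-- Second child of the bisection rule. -/
noncomputable def TP.child2 (t : TP V) : TP V :=
  ⟨if t.γ = 0 then ![t.v 4, t.mid, t.v 3, t.v 2, t.v 1]
    else if t.γ = 1 then ![t.v 4, t.mid, t.v 1, t.v 3, t.v 2]
    else ![t.v 4, t.mid, t.v 1, t.v 2, t.v 3], t.γ + 1⟩

/-!
The map `w ↦ ∑ k, w k • v k` sends the standard simplex, its bisection children and their
common face onto the corresponding sets for the simplex spanned by `v`, since affine maps
commute with convex hulls, affine spans and midpoints. For affinely independent `v` it is
injective on the hyperplane `∑ k, w k = 1`, so intersections are preserved too, and it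
suffices to bisect the standard simplex along the edge `i j`. There the child keeping vertex
`i` lies in the half-space `w j ≤ w i` and the other child in `w i ≤ w j`, while a point `w`
of the simplex with `w i = w j` is the convex combination `∑ k, w k • f k` of the face
vertices `f`, with its own coordinates as weights.
-/

open Set Function

section Update

variable {ι : Type*} [DecidableEq ι]

lemma Fintype.sum_smul_update [Fintype ι] {R E : Type*} [Semiring R] [AddCommGroup E]
    [Module R E] (c : ι → R) (g : ι → E) (a : ι) (x : E) :
    ∑ k, c k • update g a x k = ∑ k, c k • g k + c a • (x - g a) := by
  rw [← Finset.add_sum_erase _ _ (Finset.mem_univ a),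
    ← Finset.add_sum_erase _ _ (Finset.mem_univ a),
    Finset.sum_congr rfl fun k hk => by rw [update_of_ne (Finset.ne_of_mem_erase hk)]]
  simp only [update_self, smul_sub]
  abel

lemma range_update_update_subset {α : Type*} (g : ι → α) (a b : ι) (x : α) :
    range (update (update g a x) b x) ⊆ range (update g b x) := by
  rintro _ ⟨k, rfl⟩
  by_cases hkb : k = b
  · exact ⟨b, by simp [hkb]⟩
  by_cases hka : k = a
  · subst hka
    exact ⟨b, by simp [update_of_ne hkb]⟩
  · exact ⟨k, by simp [hka, hkb]⟩

end Update

lemma convex_setOf_apply_le_apply {𝕜 ι : Type*} [Semiring 𝕜] [PartialOrder 𝕜] [IsOrderedRing 𝕜]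
    (i j : ι) : Convex 𝕜 {w : ι → 𝕜 | w j ≤ w i} := by
  intro x hx y hy a b ha hb _
  simp only [mem_ofPred_eq, Pi.add_apply, Pi.smul_apply, smul_eq_mul] at *
  gcongr

section AffineCombination

variable {𝕜 ι E : Type*} [Ring 𝕜] [Fintype ι] [AddCommGroup E] [Module 𝕜 E]

lemma stdSimplex_subset_fintypeAffineCoords [PartialOrder 𝕜] :
    stdSimplex 𝕜 ι ⊆ fintypeAffineCoords ι 𝕜 :=
  fun _ hw => mem_fintypeAffineCoords_iff_sum.2 hw.2

lemma convexHull_range_affineCombination_comp [PartialOrder 𝕜] (v : ι → E) {κ : Type*}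
    (g : κ → ι → 𝕜) :
    convexHull 𝕜 (range (Finset.univ.affineCombination 𝕜 v ∘ g)) =
      Finset.univ.affineCombination 𝕜 v '' convexHull 𝕜 (range g) := by
  rw [range_comp, AffineMap.image_convexHull]

lemma affineCombination_comp_single [DecidableEq ι] (v : ι → E) :
    Finset.univ.affineCombination 𝕜 v ∘ (fun k => (Pi.single k 1 : ι → 𝕜)) = v :=
  funext fun k => Finset.univ.affineCombination_piSingle 𝕜 v (Finset.mem_univ k)

end AffineCombination

section Bisection

variable {𝕜 ι : Type*} [Field 𝕜] [LinearOrder 𝕜] [IsStrictOrderedRing 𝕜] [DecidableEq ι]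
  {i j : ι}

local notation "𝐞" => fun k : ι => (Pi.single k 1 : ι → 𝕜)
local notation "𝐦" => midpoint 𝕜 (Pi.single i 1 : ι → 𝕜) (Pi.single j 1)

lemma convexHull_range_update_midpoint_single_subset_stdSimplex [Fintype ι] (a : ι) :
    convexHull 𝕜 (range (update 𝐞 a 𝐦)) ⊆ stdSimplex 𝕜 ι := by
  refine convexHull_min ?_ (convex_stdSimplex 𝕜 ι)
  rintro _ ⟨k, rfl⟩
  by_cases hka : k = a
  · simpa [hka] using (convex_stdSimplex 𝕜 ι).midpoint_mem (single_mem_stdSimplex 𝕜 i)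
      (single_mem_stdSimplex 𝕜 j)
  · simpa [update_of_ne hka] using single_mem_stdSimplex 𝕜 k

lemma convexHull_range_update_update_midpoint_single_subset_stdSimplex [Fintype ι] :
    convexHull 𝕜 (range (update (update 𝐞 i 𝐦) j 𝐦)) ⊆ stdSimplex 𝕜 ι :=
  (convexHull_mono (range_update_update_subset _ _ _ _)).trans
    (convexHull_range_update_midpoint_single_subset_stdSimplex j)

lemma convexHull_range_update_midpoint_single_subset_setOf_le (hij : i ≠ j) :
    convexHull 𝕜 (range (update 𝐞 j 𝐦)) ⊆ {w | w j ≤ w i} := by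
  refine convexHull_min ?_ (convex_setOf_apply_le_apply i j)
  rintro _ ⟨k, rfl⟩
  by_cases hkj : k = j
  · subst hkj
    simp [midpoint_eq_smul_add, hij, hij.symm]
  · simp only [mem_ofPred_eq, update_of_ne hkj, Pi.single_apply, if_neg (Ne.symm hkj)]
    split_ifs <;> norm_num

lemma mem_convexHull_range_update_update_midpoint_single [Fintype ι] (hij : i ≠ j) {w : ι → 𝕜}
    (hw : w ∈ stdSimplex 𝕜 ι) (hwij : w i = w j) :
    w ∈ convexHull 𝕜 (range (update (update 𝐞 i 𝐦) j 𝐦)) := by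
  have hsum : ∑ k, w k • update (update 𝐞 i 𝐦) j 𝐦 k = w := by
    rw [Fintype.sum_smul_update, Fintype.sum_smul_update, update_of_ne hij.symm,
      ← pi_eq_sum_univ', hwij, midpoint_eq_smul_add, invOf_eq_inv]
    module
  rw [← hsum]
  exact (convex_convexHull 𝕜 _).sum_mem (fun k _ => hw.1 k) hw.2
    fun k _ => subset_convexHull 𝕜 _ (mem_range_self k)

lemma affineSpan_range_update_update_midpoint_single_subset_setOf_eq (hij : i ≠ j) :
    (affineSpan 𝕜 (range (update (update 𝐞 i 𝐦) j 𝐦)) : Set (ι → 𝕜)) ⊆ {w | w i = w j} := by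
  have hle : affineSpan 𝕜 (range (update (update 𝐞 i 𝐦) j 𝐦)) ≤
      ((LinearMap.proj i).eqLocus (LinearMap.proj j)).toAffineSubspace := by
    rw [affineSpan_le]
    rintro _ ⟨k, rfl⟩
    simp only [SetLike.mem_coe, Submodule.mem_toAffineSubspace, LinearMap.mem_eqLocus,
      LinearMap.proj_apply, update_apply]
    split_ifs <;> simp [midpoint_eq_smul_add, hij.symm, add_comm, *]
  exact fun w hw => LinearMap.mem_eqLocus.1 (hle hw)

theorem convexHull_inter_convexHull_bisection_stdSimplex [Fintype ι] (hij : i ≠ j) :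
    convexHull 𝕜 (range (update 𝐞 j 𝐦)) ∩ convexHull 𝕜 (range (update 𝐞 i 𝐦)) =
      convexHull 𝕜 (range (update (update 𝐞 i 𝐦) j 𝐦)) := by
  refine Subset.antisymm ?_ (subset_inter (convexHull_mono (range_update_update_subset _ _ _ _)) ?_)
  · rintro w ⟨hw₁, hw₂⟩
    rw [midpoint_comm] at hw₂
    exact mem_convexHull_range_update_update_midpoint_single hij
      (convexHull_range_update_midpoint_single_subset_stdSimplex j hw₁)
      (le_antisymm (convexHull_range_update_midpoint_single_subset_setOf_le hij.symm hw₂)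
        (convexHull_range_update_midpoint_single_subset_setOf_le hij hw₁))
  · rw [update_comm hij]
    exact convexHull_mono (range_update_update_subset _ _ _ _)

theorem convexHull_bisection_face_eq_stdSimplex_inter_affineSpan [Fintype ι] (hij : i ≠ j) :
    convexHull 𝕜 (range (update (update 𝐞 i 𝐦) j 𝐦)) =
      stdSimplex 𝕜 ι ∩ affineSpan 𝕜 (range (update (update 𝐞 i 𝐦) j 𝐦)) := by
  refine Subset.antisymm (subset_inter
    convexHull_range_update_update_midpoint_single_subset_stdSimplex
    (convexHull_subset_affineSpan _)) ?_
  rintro w ⟨hw, hspan⟩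
  exact mem_convexHull_range_update_update_midpoint_single hij hw
    (affineSpan_range_update_update_midpoint_single_subset_setOf_eq hij hspan)

variable {E : Type*} [AddCommGroup E] [Module 𝕜 E] {v : ι → E}

lemma affineCombination_comp_update_midpoint_single [Fintype ι] (v : ι → E) (g : ι → ι → 𝕜)
    (a : ι) :
    Finset.univ.affineCombination 𝕜 v ∘ update g a 𝐦 =
      update (Finset.univ.affineCombination 𝕜 v ∘ g) a (midpoint 𝕜 (v i) (v j)) := by
  rw [comp_update, AffineMap.map_midpoint]
  simp

theorem AffineIndependent.convexHull_inter_convexHull_bisection [Fintype ι]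
    (hv : AffineIndependent 𝕜 v) (hij : i ≠ j) :
    convexHull 𝕜 (range (update v j (midpoint 𝕜 (v i) (v j)))) ∩
        convexHull 𝕜 (range (update v i (midpoint 𝕜 (v i) (v j)))) =
      convexHull 𝕜 (range (update (update v i (midpoint 𝕜 (v i) (v j))) j
        (midpoint 𝕜 (v i) (v j)))) := by
  have hstd : convexHull 𝕜 (range (update 𝐞 j 𝐦)) ∩ convexHull 𝕜 (range (update 𝐞 i 𝐦)) =
      convexHull 𝕜 (range (update (update 𝐞 i 𝐦) j 𝐦)) :=
    convexHull_inter_convexHull_bisection_stdSimplex hij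
  apply_fun (Finset.univ.affineCombination 𝕜 v '' ·) at hstd
  rw [hv.injOn_affineCombination_fintypeAffineCoords.image_inter
    ((convexHull_range_update_midpoint_single_subset_stdSimplex j).trans
      stdSimplex_subset_fintypeAffineCoords)
    ((convexHull_range_update_midpoint_single_subset_stdSimplex i).trans
      stdSimplex_subset_fintypeAffineCoords)] at hstd
  simpa only [← convexHull_range_affineCombination_comp,
    affineCombination_comp_update_midpoint_single, affineCombination_comp_single] using hstd

theorem AffineIndependent.convexHull_bisection_face_eq_inter_affineSpan [Fintype ι]
    (hv : AffineIndependent 𝕜 v) (hij : i ≠ j) :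
    convexHull 𝕜 (range (update (update v i (midpoint 𝕜 (v i) (v j))) j
        (midpoint 𝕜 (v i) (v j)))) =
      convexHull 𝕜 (range v) ∩ affineSpan 𝕜 (range (update (update v i
        (midpoint 𝕜 (v i) (v j))) j (midpoint 𝕜 (v i) (v j)))) := by
  have hstd : convexHull 𝕜 (range (update (update 𝐞 i 𝐦) j 𝐦)) =
      stdSimplex 𝕜 ι ∩ affineSpan 𝕜 (range (update (update 𝐞 i 𝐦) j 𝐦)) :=
    convexHull_bisection_face_eq_stdSimplex_inter_affineSpan hij
  apply_fun (Finset.univ.affineCombination 𝕜 v '' ·) at hstd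
  rw [hv.injOn_affineCombination_fintypeAffineCoords.image_inter
    stdSimplex_subset_fintypeAffineCoords (affineSpan_le.2 ((subset_convexHull 𝕜 _).trans
      (convexHull_range_update_update_midpoint_single_subset_stdSimplex.trans
        stdSimplex_subset_fintypeAffineCoords))),
    ← AffineSubspace.coe_map, AffineSubspace.map_span, ← range_comp,
    ← convexHull_rangle_single_eq_stdSimplex] at hstd
  simpa only [← convexHull_range_affineCombination_comp,
    affineCombination_comp_update_midpoint_single, affineCombination_comp_single] using hstd

end Bisection

namespace TP

variable {E : Type*} [AddCommGroup E] [Module ℝ E]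

lemma range_child1_v (t : TP E) : range t.child1.v = range (update t.v 4 t.mid) := by
  ext x
  simp only [child1, Matrix.range_cons, Matrix.range_empty, union_empty, union_singleton,
    union_insert, mem_insert_iff, mem_singleton_iff, mem_range, update_apply, Fin.exists_fin_succ,
    Fin.reduceEq, ↓reduceIte, Fin.succ_zero_eq_one, Fin.succ_one_eq_two, Fin.reduceSucc,
    IsEmpty.exists_iff, or_false]
  tauto

lemma range_child2_v (t : TP E) : range t.child2.v = range (update t.v 0 t.mid) := by
  ext x
  unfold child2
  split_ifs <;>
  · simp only [Matrix.range_cons, Matrix.range_empty, union_empty, union_singleton, union_insert,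
      mem_insert_iff, mem_singleton_iff, mem_range, update_apply, Fin.exists_fin_succ, ↓reduceIte,
      Fin.succ_ne_zero, Fin.succ_zero_eq_one, Fin.succ_one_eq_two, Fin.reduceSucc,
      IsEmpty.exists_iff, or_false]
    tauto

lemma insert_mid_eq_range (t : TP E) :
    ({t.mid, t.v 1, t.v 2, t.v 3} : Set E) = range (update (update t.v 0 t.mid) 4 t.mid) := by
  ext x
  simp only [mem_insert_iff, mem_singleton_iff, mem_range, update_apply, Fin.exists_fin_succ,
    Fin.reduceEq, ↓reduceIte, Fin.succ_ne_zero, Fin.succ_zero_eq_one, Fin.succ_one_eq_two,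
    Fin.reduceSucc, IsEmpty.exists_iff, or_false]
  tauto

end TP

theorem bisection_children_shared_hyperface (t : TP (Fin 4 → ℝ))
    (h : AffineIndependent ℝ t.v) :
    convexHull ℝ (Set.range t.child1.v) ∩ convexHull ℝ (Set.range t.child2.v) =
      convexHull ℝ ({t.mid, t.v 1, t.v 2, t.v 3} : Set (Fin 4 → ℝ)) ∧
    convexHull ℝ ({t.mid, t.v 1, t.v 2, t.v 3} : Set (Fin 4 → ℝ)) =
      convexHull ℝ (Set.range t.v) ∩
        (affineSpan ℝ ({t.mid, t.v 1, t.v 2, t.v 3} : Set (Fin 4 → ℝ)) :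
          Set (Fin 4 → ℝ)) := by
  have h04 : (0 : Fin 5) ≠ 4 := by decide
  rw [TP.range_child1_v, TP.range_child2_v, TP.insert_mid_eq_range]
  exact ⟨h.convexHull_inter_convexHull_bisection h04,
    h.convexHull_bisection_face_eq_inter_affineSpan h04⟩
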